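/- arXiv:math/0107001 — 5 statements merged into one kernel-verified Lean document; each statement's English description precedes it below -/
import Mathlib

section
/- For every g ∈ SL₃(ℂ) and every z ∈ X_ℂ, the matrix g·z = (g z² g*)^{1/2} again belongs to X_ℂ, and for all x, y ∈ X_ℂ one has d_ℂ(g·x, g·y) = d_ℂ(x, y); that is, SL₃(ℂ) acts on X_ℂ by isometries for the distance d_ℂ. -/
open Matrix
open scoped ComplexOrder

noncomputable section
open scoped Classical

/-- Operator norm of a complex matrix acting on `ℂⁿ` with the ℓ² norm. -/
def opN {n : ℕ} (M : Matrix (Fin n) (Fin n) ℂ) : ℝ :=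
  ‖Matrix.toEuclideanCLM (𝕜 := ℂ) M‖

/-- The distance `d(x,y) = log‖x⁻¹y‖ + log‖y⁻¹x‖`. -/
def dX {n : ℕ} (x y : Matrix (Fin n) (Fin n) ℂ) : ℝ :=
  Real.log (opN (x⁻¹ * y)) + Real.log (opN (y⁻¹ * x))

/-- The action `g·z = (g z² g*)^{1/2}` (the unique positive semidefinite square root). -/
def act {n : ℕ} (g z : Matrix (Fin n) (Fin n) ℂ) : Matrix (Fin n) (Fin n) ℂ :=
  if h : (g * z ^ 2 * gᴴ).PosSemidef then
    (h.1.eigenvectorUnitary : Matrix (Fin n) (Fin n) ℂ) *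
      Matrix.diagonal (fun i => ((Real.sqrt (h.1.eigenvalues i) : ℝ) : ℂ)) *
      (star h.1.eigenvectorUnitary : Matrix (Fin n) (Fin n) ℂ)
  else 0

/-- `X_ℂ`: Hermitian positive definite complex 3×3 matrices of determinant 1. -/
def XC : Set (Matrix (Fin 3) (Fin 3) ℂ) :=
  {x | x.IsHermitian ∧ x.PosDef ∧ x.det = 1}

/-- The matrix `J` with blocks `[[0, -I],[I, 0]]`. -/
def J6 : Matrix (Fin 6) (Fin 6) ℂ :=
  Matrix.reindex finSumFinEquiv finSumFinEquiv
    (Matrix.fromBlocks 0 (-1) 1 0 : Matrix (Fin 3 ⊕ Fin 3) (Fin 3 ⊕ Fin 3) ℂ)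

/-- A 6×6 complex matrix is quaternionic if `J M J⁻¹ = M̄`. -/
def IsQuat (M : Matrix (Fin 6) (Fin 6) ℂ) : Prop :=
  J6 * M * J6⁻¹ = M.map star

/-- `X_ℍ`: quaternionic Hermitian positive definite 6×6 matrices of determinant 1. -/
def XH : Set (Matrix (Fin 6) (Fin 6) ℂ) :=
  {x | IsQuat x ∧ x.IsHermitian ∧ x.PosDef ∧ x.det = 1}

/-- `A_ℍ`: diagonal matrices in `X_ℍ`. -/
def AH : Set (Matrix (Fin 6) (Fin 6) ℂ) :=
  {x | x ∈ XH ∧ x.IsDiag}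

/-- first complex component of a quaternionic matrix, `M = M₁ + M₂ j`. -/
def c1 (M : Matrix (Fin 3) (Fin 3) (Quaternion ℝ)) : Matrix (Fin 3) (Fin 3) ℂ :=
  fun i j => ⟨(M i j).re, (M i j).imI⟩

/-- second complex component of a quaternionic matrix, `M = M₁ + M₂ j`. -/
def c2 (M : Matrix (Fin 3) (Fin 3) (Quaternion ℝ)) : Matrix (Fin 3) (Fin 3) ℂ :=
  fun i j => ⟨(M i j).imJ, (M i j).imK⟩

/-- The embedding `ι : M₃(ℍ) → M₆(ℂ)`, `M = M₁ + M₂ j ↦ [[M₁, -M̄₂],[M₂, M̄₁]]`. -/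
def iota (M : Matrix (Fin 3) (Fin 3) (Quaternion ℝ)) : Matrix (Fin 6) (Fin 6) ℂ :=
  Matrix.reindex finSumFinEquiv finSumFinEquiv
    (Matrix.fromBlocks (c1 M) (-((c2 M).map star)) (c2 M) ((c1 M).map star))

/-! For Hermitian `z`, the matrix `g z² g*` is positive semidefinite and `act g z` is its square
root in the continuous functional calculus; hence `act g z` is positive semidefinite with
determinant `√(|det g|² (det z)²) = 1`, so it lies in `X_ℂ`. For the isometry, if `a² = g x² g*`
and `b² = g y² g*` then `u = a⁻¹ g x` and `v = b⁻¹ g y` are unitary (the unitary factors of the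
polar decompositions of `g x` and `g y`) and `a⁻¹ b = u (x⁻¹ y) v*`, while the operator norm is
invariant under multiplication by unitaries on either side. -/

open scoped MatrixOrder

section
variable {n : ℕ}

lemma opN_mul_mul_of_mem_unitary {u v : Matrix (Fin n) (Fin n) ℂ} (M : Matrix (Fin n) (Fin n) ℂ)
    (hu : u ∈ unitary _) (hv : v ∈ unitary _) : opN (u * M * v) = opN M := by
  simp only [opN, map_mul]
  rw [CStarRing.norm_mul_mem_unitary _ (Unitary.map_mem _ hv),
    CStarRing.norm_mem_unitary_mul _ (Unitary.map_mem _ hu)]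

lemma inv_mul_mem_unitary_of_mul_self_eq {a m : Matrix (Fin n) (Fin n) ℂ} (ha : a.IsHermitian)
    (hau : IsUnit a) (h : a * a = m * mᴴ) : a⁻¹ * m ∈ unitary _ := by
  have hdet := (isUnit_iff_isUnit_det a).mp hau
  rw [← Matrix.unitaryGroup, mem_unitaryGroup_iff, star_eq_conjTranspose, conjTranspose_mul,
    ha.inv.eq, Matrix.mul_assoc, ← Matrix.mul_assoc m, ← h, Matrix.mul_assoc,
    mul_nonsing_inv _ hdet, Matrix.mul_one, nonsing_inv_mul _ hdet]

lemma mul_sq_mul_conjTranspose (g : Matrix (Fin n) (Fin n) ℂ) {z : Matrix (Fin n) (Fin n) ℂ}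
    (hz : z.IsHermitian) : g * z ^ 2 * gᴴ = g * z * (g * z)ᴴ := by
  rw [conjTranspose_mul, hz.eq, sq]
  simp only [Matrix.mul_assoc]

lemma opN_inv_mul_eq_of_mul_self_eq {g x y a b : Matrix (Fin n) (Fin n) ℂ}
    (hx : x.IsHermitian) (hxu : IsUnit x) (hy : y.IsHermitian)
    (ha : a.IsHermitian) (hau : IsUnit a) (hb : b.IsHermitian) (hbu : IsUnit b)
    (haa : a * a = g * x ^ 2 * gᴴ) (hbb : b * b = g * y ^ 2 * gᴴ) :
    opN (a⁻¹ * b) = opN (x⁻¹ * y) := by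
  rw [mul_sq_mul_conjTranspose g hx] at haa
  rw [mul_sq_mul_conjTranspose g hy] at hbb
  have hu := inv_mul_mem_unitary_of_mul_self_eq ha hau haa
  have hv := Unitary.star_mem (inv_mul_mem_unitary_of_mul_self_eq hb hbu hbb)
  have hxdet := (isUnit_iff_isUnit_det x).mp hxu
  have hbdet := (isUnit_iff_isUnit_det b).mp hbu
  have hfactor : a⁻¹ * b = a⁻¹ * (g * x) * (x⁻¹ * y) * star (b⁻¹ * (g * y)) := by
    rw [star_eq_conjTranspose, conjTranspose_mul, hb.inv.eq]
    simp only [Matrix.mul_assoc]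
    rw [mul_nonsing_inv_cancel_left _ _ hxdet, ← Matrix.mul_assoc g y,
      ← Matrix.mul_assoc (g * y), ← hbb, Matrix.mul_assoc, mul_nonsing_inv _ hbdet, Matrix.mul_one]
  rw [hfactor, opN_mul_mul_of_mem_unitary _ hu hv]

lemma posSemidef_mul_sq_mul_conjTranspose (g : Matrix (Fin n) (Fin n) ℂ)
    {z : Matrix (Fin n) (Fin n) ℂ} (hz : z.IsHermitian) : (g * z ^ 2 * gᴴ).PosSemidef := by
  rw [mul_sq_mul_conjTranspose g hz]
  exact posSemidef_self_mul_conjTranspose _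

lemma act_eq_sqrt (g : Matrix (Fin n) (Fin n) ℂ) {z : Matrix (Fin n) (Fin n) ℂ}
    (hz : z.IsHermitian) : act g z = CFC.sqrt (g * z ^ 2 * gᴴ) := by
  have hA := posSemidef_mul_sq_mul_conjTranspose g hz
  rw [act, dif_pos hA, CFC.sqrt_eq_cfc, cfc_nnreal_eq_real _ _, hA.1.cfc_eq, IsHermitian.cfc,
    Unitary.conjStarAlgAut_apply]
  simp [Function.comp_def, hA.eigenvalues_nonneg]

lemma act_mul_self (g : Matrix (Fin n) (Fin n) ℂ) {z : Matrix (Fin n) (Fin n) ℂ}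
    (hz : z.IsHermitian) : act g z * act g z = g * z ^ 2 * gᴴ := by
  rw [act_eq_sqrt g hz]
  exact CFC.sqrt_mul_sqrt_self _ (posSemidef_mul_sq_mul_conjTranspose g hz).nonneg

lemma posSemidef_act (g : Matrix (Fin n) (Fin n) ℂ) {z : Matrix (Fin n) (Fin n) ℂ}
    (hz : z.IsHermitian) : (act g z).PosSemidef := by
  rw [act_eq_sqrt g hz, ← nonneg_iff_posSemidef]
  exact CFC.sqrt_nonneg _

lemma det_act (g : Matrix (Fin n) (Fin n) ℂ) {z : Matrix (Fin n) (Fin n) ℂ}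
    (hz : z.IsHermitian) : (act g z).det = RCLike.sqrt (g * z ^ 2 * gᴴ).det := by
  rw [act_eq_sqrt g hz, (posSemidef_mul_sq_mul_conjTranspose g hz).det_sqrt]

end

lemma act_mem_XC {g z : Matrix (Fin 3) (Fin 3) ℂ} (hg : g.det = 1) (hz : z ∈ XC) :
    act g z ∈ XC := by
  obtain ⟨hzh, -, hzdet⟩ := hz
  have hdet : (act g z).det = 1 := by
    rw [det_act g hzh, det_mul, det_mul, det_conjTranspose, det_pow, hg, hzdet]
    simp
  have hpsd := posSemidef_act g hzh
  exact ⟨hpsd.isHermitian, hpsd.posDef_iff_det_ne_zero.mpr (by simp [hdet]), hdet⟩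

lemma opN_inv_mul_act {g x y : Matrix (Fin 3) (Fin 3) ℂ} (hg : g.det = 1) (hx : x ∈ XC)
    (hy : y ∈ XC) : opN ((act g x)⁻¹ * act g y) = opN (x⁻¹ * y) := by
  obtain ⟨hah, hapd, -⟩ := act_mem_XC hg hx
  obtain ⟨hbh, hbpd, -⟩ := act_mem_XC hg hy
  exact opN_inv_mul_eq_of_mul_self_eq hx.1 hx.2.1.isUnit hy.1 hah hapd.isUnit hbh hbpd.isUnit
    (act_mul_self g hx.1) (act_mul_self g hy.1)

/-- For `g ∈ SL₃(ℂ)`, the action `g·z = (g z² g*)^{1/2}` maps `X_ℂ` to itself and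
is isometric for the distance `d_ℂ`. -/
theorem SL3C_acts_isometrically (g : Matrix (Fin 3) (Fin 3) ℂ) (hg : g.det = 1) :
    (∀ z ∈ XC, act g z ∈ XC) ∧
    (∀ x ∈ XC, ∀ y ∈ XC, dX (act g x) (act g y) = dX x y) :=
  ⟨fun _ hz => act_mem_XC hg hz, fun x hx y hy => by
    rw [dX, dX, opN_inv_mul_act hg hx hy, opN_inv_mul_act hg hy hx]⟩

end
end

section
/- Every 3×3 quaternionic matrix z that is Hermitian (equal to its quaternionic conjugate transpose) can be diagonalized with real diagonal entries by an element of the subgroup of the quaternionic unitary group generated by the matrices T_h = diag(h,1,1) (for h a quaternion of norm 1) together with the real special orthogonal matrices SO₃(ℝ): there exists u in this subgroup such that u z u* is a diagonal matrix all of whose entries are real. -/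
/-!
A Hermitian `z` has a real eigenvalue `μ` with a unit eigenvector `v`: `z` is a symmetric
operator on `ℍ³`, viewed as a real inner product space. Conjugating `T_h` by a cyclic
permutation matrix moves `h` along the diagonal, so every diagonal matrix of unit quaternions
lies in the subgroup; such a matrix turns `v` into a real vector, which two plane rotations carry
to `e₀`. This splits off `μ`, and conjugating by `diag(1, 1, p)` for a suitable unit `p` makes the
remaining off-diagonal entry real. The result is a real symmetric matrix, which some `O` in
`SO₃(ℝ)` diagonalizes; in odd dimension `-O` corrects the sign of `det O`.
-/

open Matrix

noncomputable section

/-- For a quaternion `h`, the diagonal matrix `T_h = diag(h,1,1)`. -/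
def Th (h : Quaternion ℝ) : Matrix (Fin 3) (Fin 3) (Quaternion ℝ) :=
  Matrix.diagonal ![h, 1, 1]

/-- The generating set: the `T_h` for `h` a unit quaternion, together with the
real special orthogonal matrices `SO₃(ℝ)`, viewed as invertible quaternionic
matrices. -/
def genSet : Set (Matrix (Fin 3) (Fin 3) (Quaternion ℝ))ˣ :=
  {u | (∃ h : Quaternion ℝ, ‖h‖ = 1 ∧ u.val = Th h) ∨
       (∃ x : Matrix (Fin 3) (Fin 3) ℝ, x * xᵀ = 1 ∧ x.det = 1 ∧
         u.val = x.map (algebraMap ℝ (Quaternion ℝ)))}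

local notation "ℍ" => Quaternion ℝ

theorem Quaternion.mem_unitary_of_norm_eq_one {h : ℍ} (hh : ‖h‖ = 1) : h ∈ unitary ℍ := by
  have hn : ((Quaternion.normSq h : ℝ) : ℍ) = 1 := by
    rw [Quaternion.normSq_eq_norm_mul_self, hh, mul_one, Quaternion.coe_one]
  exact Unitary.mem_iff.mpr
    ⟨by rw [Quaternion.star_mul_self, hn], by rw [Quaternion.self_mul_star, hn]⟩

theorem Quaternion.exists_norm_eq_one_mul_eq_norm (q : ℍ) :
    ∃ p : ℍ, ‖p‖ = 1 ∧ p * q = (‖q‖ : ℍ) := by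
  rcases eq_or_ne q 0 with rfl | hq
  · exact ⟨1, norm_one, by simp⟩
  · have hq' : ‖q‖ ≠ 0 := norm_ne_zero_iff.mpr hq
    refine ⟨(‖q‖⁻¹ : ℝ) • star q, ?_, ?_⟩
    · rw [norm_smul, norm_star, norm_inv, norm_norm, inv_mul_cancel₀ hq']
    · rw [smul_mul_assoc, Quaternion.star_mul_self, Quaternion.normSq_eq_norm_mul_self,
        Quaternion.smul_coe, inv_mul_cancel_left₀ hq']

theorem Quaternion.re_dotProduct {n : Type*} [Fintype n] (v w : n → ℍ) :
    (v ⬝ᵥ w).re = ∑ i, (v i * w i).re :=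
  map_sum (QuaternionAlgebra.reₗ (R := ℝ) (-1) 0 (-1)) (fun i => v i * w i) _

theorem Quaternion.re_dotProduct_comm {n : Type*} [Fintype n] (v w : n → ℍ) :
    (v ⬝ᵥ w).re = (w ⬝ᵥ v).re := by
  rw [re_dotProduct, re_dotProduct]
  exact Finset.sum_congr rfl fun i _ => by simp only [re_mul]; ring

theorem Quaternion.inner_toLp_eq_re_dotProduct {n : Type*} [Fintype n] (v w : n → ℍ) :
    inner ℝ (WithLp.toLp 2 v) (WithLp.toLp 2 w) = (v ⬝ᵥ star w).re := by
  simp only [PiLp.inner_apply, inner_def, re_dotProduct, Pi.star_apply]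

theorem Matrix.diagonal_mem_unitary {R n : Type*} [Ring R] [StarRing R] [Fintype n]
    [DecidableEq n] {d : n → R} (hd : ∀ i, d i ∈ unitary R) :
    diagonal d ∈ unitary (Matrix n n R) := by
  simp only [Unitary.mem_iff, star_eq_conjTranspose, diagonal_conjTranspose,
    diagonal_mul_diagonal, ← diagonal_one]
  exact ⟨congrArg diagonal (funext fun i => Unitary.star_mul_self_of_mem (hd i)),
    congrArg diagonal (funext fun i => Unitary.mul_star_self_of_mem (hd i))⟩

theorem Matrix.conjTranspose_map_algebraMap {m n : Type*} (x : Matrix m n ℝ) :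
    (x.map (algebraMap ℝ ℍ))ᴴ = xᵀ.map (algebraMap ℝ ℍ) := by
  rw [← conjTranspose_map _ fun a => (Quaternion.star_coe a).symm,
    conjTranspose_eq_transpose_of_trivial]

theorem Matrix.map_mem_unitary_of_mem_orthogonalGroup {n : Type*} [Fintype n] [DecidableEq n]
    {x : Matrix n n ℝ} (hx : x ∈ orthogonalGroup n ℝ) :
    x.map (algebraMap ℝ ℍ) ∈ unitary (Matrix n n ℍ) := by
  rw [Unitary.mem_iff, star_eq_conjTranspose, conjTranspose_map_algebraMap, ← Matrix.map_mul,
    ← Matrix.map_mul, (mem_orthogonalGroup_iff _ _).mp hx, (mem_orthogonalGroup_iff' _ _).mp hx,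
    Matrix.map_one _ (map_zero _) (map_one _)]
  exact ⟨rfl, rfl⟩

theorem Matrix.IsSymm.exists_mem_specialOrthogonalGroup_conj_eq_diagonal
    {n : Type*} [Fintype n] [DecidableEq n] (hn : Odd (Fintype.card n))
    {S : Matrix n n ℝ} (hS : S.IsSymm) :
    ∃ O ∈ specialOrthogonalGroup n ℝ, ∃ d : n → ℝ, O * S * Oᵀ = diagonal d := by
  have hH : S.IsHermitian := by simpa [IsHermitian] using hS.eq
  set U : Matrix n n ℝ := (hH.eigenvectorUnitary : Matrix n n ℝ)
  have hUS : Uᵀ * S * U = diagonal hH.eigenvalues := by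
    simpa [U, star_eq_conjTranspose] using hH.conjStarAlgAut_star_eigenvectorUnitary
  have hU : Uᵀ * U = 1 := by
    simpa [U, star_eq_conjTranspose] using Unitary.coe_star_mul_self hH.eigenvectorUnitary
  have hO : Uᵀ ∈ orthogonalGroup n ℝ := by rwa [mem_orthogonalGroup_iff, transpose_transpose]
  have hdet : U.det * U.det = 1 := by simpa [det_transpose] using congrArg det hU
  rcases mul_self_eq_one_iff.mp hdet with h | h
  · exact ⟨Uᵀ, (mem_specialOrthogonalGroup_iff).mpr ⟨hO, by rw [det_transpose, h]⟩, _,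
      by rwa [transpose_transpose]⟩
  · refine ⟨-Uᵀ, (mem_specialOrthogonalGroup_iff).mpr ⟨?_, ?_⟩, _, by simpa using hUS⟩
    · simpa [mem_orthogonalGroup_iff] using hU
    · rw [det_neg, det_transpose, h, hn.neg_one_pow]; norm_num

theorem exists_isSymm_eq_map_of_star_apply_eq {n : Type*} {W : Matrix n n ℍ} (hW : Wᴴ = W)
    (hreal : ∀ i j, star (W i j) = W i j) :
    ∃ S : Matrix n n ℝ, S.IsSymm ∧ W = S.map (algebraMap ℝ ℍ) := by
  refine ⟨W.map (·.re), ?_, ?_⟩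
  · ext i j
    rw [transpose_apply, map_apply, map_apply, ← Quaternion.re_star, ← conjTranspose_apply, hW]
  · ext1 i j
    exact Quaternion.star_eq_self.mp (hreal i j)

theorem mulVec_conj_mulVec_eq_smul {n : Type*} [Fintype n] [DecidableEq n] {U z : Matrix n n ℍ}
    (hU : U ∈ unitary (Matrix n n ℍ)) {μ : ℝ} {v : n → ℍ} (hv : z *ᵥ v = μ • v) :
    (U * z * Uᴴ) *ᵥ (U *ᵥ v) = μ • (U *ᵥ v) := by
  rw [← mulVec_mulVec, ← mulVec_mulVec, mulVec_mulVec _ Uᴴ, ← star_eq_conjTranspose,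
    Unitary.star_mul_self_of_mem hU, one_mulVec, hv, mulVec_smul]

theorem exists_unit_eigenvector_of_conjTranspose_eq {n : Type*} [Fintype n] [Nonempty n]
    {z : Matrix n n ℍ} (hz : zᴴ = z) :
    ∃ (μ : ℝ) (v : n → ℍ), ∑ i, ‖v i‖ ^ 2 = 1 ∧ z *ᵥ v = μ • v := by
  let T : PiLp 2 (fun _ : n => ℍ) →ₗ[ℝ] PiLp 2 (fun _ : n => ℍ) :=
    { toFun := fun v => WithLp.toLp 2 (z *ᵥ v.ofLp)
      map_add' := fun v w => by simp [mulVec_add]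
      map_smul' := fun c v => by simp [mulVec_smul] }
  have hT : T.IsSymmetric := fun x y => by
    change inner ℝ (WithLp.toLp 2 (z *ᵥ x.ofLp)) (WithLp.toLp 2 y.ofLp) =
      inner ℝ (WithLp.toLp 2 x.ofLp) (WithLp.toLp 2 (z *ᵥ y.ofLp))
    rw [Quaternion.inner_toLp_eq_re_dotProduct, Quaternion.inner_toLp_eq_re_dotProduct,
      star_mulVec, hz, Quaternion.re_dotProduct_comm, dotProduct_mulVec,
      Quaternion.re_dotProduct_comm]
  obtain ⟨μ, hμ⟩ : ∃ μ : ℝ, Module.End.HasEigenvalue T μ :=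
    ⟨_, hT.hasEigenvalue_iSup_of_finiteDimensional⟩
  obtain ⟨v, hv⟩ := hμ.exists_hasEigenvector
  set u := ‖v‖⁻¹ • v
  have hTu : T u = μ • u := by
    rw [map_smul, hv.apply_eq_smul, smul_comm]
  refine ⟨μ, u.ofLp, ?_, congrArg WithLp.ofLp hTu⟩
  have hu : ‖u‖ = 1 := by simpa using norm_smul_inv_norm (𝕜 := ℝ) hv.2
  rw [← PiLp.norm_sq_eq_of_L2, hu, one_pow]

theorem exists_plane_rotation_eq_sqrt (x y : ℝ) :
    ∃ c s : ℝ, c ^ 2 + s ^ 2 = 1 ∧ c * x + s * y = √(x ^ 2 + y ^ 2) ∧ -s * x + c * y = 0 := by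
  set ρ := √(x ^ 2 + y ^ 2)
  have hρ : ρ ^ 2 = x ^ 2 + y ^ 2 := Real.sq_sqrt (by positivity)
  rcases eq_or_ne ρ 0 with h0 | h0
  · have hx : x = 0 := by nlinarith
    have hy : y = 0 := by nlinarith
    exact ⟨1, 0, by norm_num, by simp [hx, hy, h0], by simp [hy]⟩
  · refine ⟨x / ρ, y / ρ, ?_, ?_, ?_⟩
    · field_simp; linarith
    · field_simp; linarith
    · field_simp; ring

def rotYZ (c s : ℝ) : Matrix (Fin 3) (Fin 3) ℝ := !![1, 0, 0; 0, c, s; 0, -s, c]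

def rotXY (c s : ℝ) : Matrix (Fin 3) (Fin 3) ℝ := !![c, s, 0; -s, c, 0; 0, 0, 1]

theorem rotYZ_mem_specialOrthogonalGroup {c s : ℝ} (h : c ^ 2 + s ^ 2 = 1) :
    rotYZ c s ∈ specialOrthogonalGroup (Fin 3) ℝ := by
  refine (mem_specialOrthogonalGroup_iff).mpr ⟨(mem_orthogonalGroup_iff _ _).mpr ?_, ?_⟩
  · ext i j; fin_cases i <;> fin_cases j <;> simp [rotYZ, mul_apply, Fin.sum_univ_three] <;>
      grind
  · simp [rotYZ, det_fin_three]; linear_combination h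

theorem rotXY_mem_specialOrthogonalGroup {c s : ℝ} (h : c ^ 2 + s ^ 2 = 1) :
    rotXY c s ∈ specialOrthogonalGroup (Fin 3) ℝ := by
  refine (mem_specialOrthogonalGroup_iff).mpr ⟨(mem_orthogonalGroup_iff _ _).mpr ?_, ?_⟩
  · ext i j; fin_cases i <;> fin_cases j <;> simp [rotXY, mul_apply, Fin.sum_univ_three] <;>
      grind
  · simp [rotXY, det_fin_three]; linear_combination h

theorem exists_mem_specialOrthogonalGroup_mulVec_eq_single (r : Fin 3 → ℝ) :
    ∃ O ∈ specialOrthogonalGroup (Fin 3) ℝ, O *ᵥ r = Pi.single 0 √(∑ i, r i ^ 2) := by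
  obtain ⟨c, s, hcs, h1, h2⟩ := exists_plane_rotation_eq_sqrt (r 1) (r 2)
  obtain ⟨c', s', hcs', h1', h2'⟩ := exists_plane_rotation_eq_sqrt (r 0) √(r 1 ^ 2 + r 2 ^ 2)
  rw [Real.sq_sqrt (by positivity), ← add_assoc] at h1'
  refine ⟨rotXY c' s' * rotYZ c s,
    mul_mem (rotXY_mem_specialOrthogonalGroup hcs') (rotYZ_mem_specialOrthogonalGroup hcs), ?_⟩
  have hYZ : rotYZ c s *ᵥ r = ![r 0, √(r 1 ^ 2 + r 2 ^ 2), 0] := by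
    ext i; fin_cases i <;> simp [rotYZ, mulVec, dotProduct, Fin.sum_univ_three] <;> linarith
  rw [← mulVec_mulVec, hYZ, Fin.sum_univ_three]
  ext i; fin_cases i <;> simp [rotXY, mulVec, dotProduct, Fin.sum_univ_three] <;> linarith

def genMatrices : Submonoid (Matrix (Fin 3) (Fin 3) ℍ) :=
  (Subgroup.closure genSet).toSubmonoid.map (Units.coeHom _)

theorem Th_mem_unitary {h : ℍ} (hh : ‖h‖ = 1) : Th h ∈ unitary (Matrix (Fin 3) (Fin 3) ℍ) :=
  diagonal_mem_unitary fun i => by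
    fin_cases i
    exacts [Quaternion.mem_unitary_of_norm_eq_one hh, one_mem _, one_mem _]

theorem closure_genSet_le_range_toUnits :
    Subgroup.closure genSet ≤ (Unitary.toUnits (R := Matrix (Fin 3) (Fin 3) ℍ)).range := by
  rw [Subgroup.closure_le]
  intro u hu
  have hmem : u.val ∈ unitary _ := by
    rcases hu with ⟨h, hh, hu⟩ | ⟨x, hx, -, hu⟩
    · exact hu ▸ Th_mem_unitary hh
    · exact hu ▸ map_mem_unitary_of_mem_orthogonalGroup ((mem_orthogonalGroup_iff _ _).mpr hx)
  exact ⟨⟨u.val, hmem⟩, Units.ext rfl⟩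

theorem genMatrices_le_unitary : genMatrices ≤ unitary (Matrix (Fin 3) (Fin 3) ℍ) := by
  rintro _ ⟨u, hu, rfl⟩
  obtain ⟨U, rfl⟩ := closure_genSet_le_range_toUnits hu
  exact U.2

theorem Th_mem_genMatrices {h : ℍ} (hh : ‖h‖ = 1) : Th h ∈ genMatrices :=
  ⟨Unitary.toUnits ⟨Th h, Th_mem_unitary hh⟩, Subgroup.subset_closure (Or.inl ⟨h, hh, rfl⟩), rfl⟩

theorem map_mem_genMatrices {x : Matrix (Fin 3) (Fin 3) ℝ}
    (hx : x ∈ specialOrthogonalGroup (Fin 3) ℝ) : x.map (algebraMap ℝ ℍ) ∈ genMatrices := by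
  rw [mem_specialOrthogonalGroup_iff] at hx
  exact ⟨Unitary.toUnits ⟨_, map_mem_unitary_of_mem_orthogonalGroup hx.1⟩,
    Subgroup.subset_closure (Or.inr ⟨x, (mem_orthogonalGroup_iff _ _).mp hx.1, hx.2, rfl⟩), rfl⟩

theorem diagonal_mem_genMatrices {d : Fin 3 → ℍ} (hd : ∀ i, ‖d i‖ = 1) :
    diagonal d ∈ genMatrices := by
  let C : Matrix (Fin 3) (Fin 3) ℝ := !![0, 1, 0; 0, 0, 1; 1, 0, 0]
  have hC : C ∈ specialOrthogonalGroup (Fin 3) ℝ := by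
    refine (mem_specialOrthogonalGroup_iff).mpr ⟨(mem_orthogonalGroup_iff _ _).mpr ?_, ?_⟩
    · ext i j; fin_cases i <;> fin_cases j <;> simp [C, mul_apply, Fin.sum_univ_three]
    · simp [C, det_fin_three]
  -- `C ^ 3 = 1`, and conjugation by `C` cycles the diagonal entries
  have key : diagonal d = Th (d 0) * C.map (algebraMap ℝ ℍ) * Th (d 2) *
      C.map (algebraMap ℝ ℍ) * Th (d 1) * C.map (algebraMap ℝ ℍ) := by
    refine Matrix.ext fun i j => ?_
    fin_cases i <;> fin_cases j <;> simp [C, Th, mul_apply, Fin.sum_univ_three]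
  rw [key]
  have hCm := map_mem_genMatrices hC
  refine mul_mem (mul_mem (mul_mem (mul_mem (mul_mem ?_ hCm) ?_) hCm) ?_) hCm <;>
    exact Th_mem_genMatrices (hd _)

theorem exists_mem_genMatrices_mulVec_eq_single (v : Fin 3 → ℍ) :
    ∃ A ∈ genMatrices, A *ᵥ v = Pi.single 0 ((√(∑ i, ‖v i‖ ^ 2) : ℝ) : ℍ) := by
  choose p hp hpv using fun i => Quaternion.exists_norm_eq_one_mul_eq_norm (v i)
  obtain ⟨O, hO, hOv⟩ := exists_mem_specialOrthogonalGroup_mulVec_eq_single fun i => ‖v i‖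
  refine ⟨O.map (algebraMap ℝ ℍ) * diagonal p,
    mul_mem (map_mem_genMatrices hO) (diagonal_mem_genMatrices hp), ?_⟩
  have hpv' : diagonal p *ᵥ v = algebraMap ℝ ℍ ∘ fun i => ‖v i‖ := by
    ext1 i; rw [mulVec_diagonal, hpv]; rfl
  ext1 i
  rw [← mulVec_mulVec, hpv', ← RingHom.map_mulVec, hOv]
  rcases eq_or_ne i 0 with rfl | hi
  · simp
  · simp [hi]

theorem exists_mem_genMatrices_conj_eq_map {w : Matrix (Fin 3) (Fin 3) ℍ} (hw : wᴴ = w)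
    (h10 : w 1 0 = 0) (h20 : w 2 0 = 0) :
    ∃ B ∈ genMatrices, ∃ S : Matrix (Fin 3) (Fin 3) ℝ, S.IsSymm ∧
      B * w * Bᴴ = S.map (algebraMap ℝ ℍ) := by
  obtain ⟨p, hp, hpq⟩ := Quaternion.exists_norm_eq_one_mul_eq_norm (w 2 1)
  set B := diagonal ![1, 1, p]
  have hB : B ∈ genMatrices := diagonal_mem_genMatrices fun i => by fin_cases i <;> simp [hp]
  refine ⟨B, hB, exists_isSymm_eq_map_of_star_apply_eq ?_ ?_⟩
  · rw [conjTranspose_mul, conjTranspose_mul, conjTranspose_conjTranspose, hw, mul_assoc]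
  have hsym : ∀ i j, w i j = star (w j i) := fun i j => by
    rw [← conjTranspose_apply, hw]
  have hdiag : ∀ i, star (w i i) = w i i := fun i => (hsym i i).symm
  have h21 : star (w 2 1) * star p = p * w 2 1 := by
    rw [← star_mul, hpq, Quaternion.star_coe]
  intro i j
  fin_cases i <;> fin_cases j <;>
    simp [B, diagonal_mul, mul_diagonal, h10, h20, hsym 0 1, hsym 0 2, hsym 1 2, hdiag, h21,
      mul_assoc]

/-- Any Hermitian 3×3 quaternionic matrix is diagonalized, with real diagonal
entries, by an element of the subgroup generated by the `T_h` and `SO₃(ℝ)`. -/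
theorem hermitian_diagonalizable_by_Th_and_SO3
    (z : Matrix (Fin 3) (Fin 3) (Quaternion ℝ)) (hz : zᴴ = z) :
    ∃ u ∈ Subgroup.closure genSet, ∃ d : Fin 3 → ℝ,
      u.val * z *
        (u.val)ᴴ =
      Matrix.diagonal (fun i => algebraMap ℝ (Quaternion ℝ) (d i)) := by
  obtain ⟨μ, v, hv1, hv⟩ := exists_unit_eigenvector_of_conjTranspose_eq hz
  obtain ⟨A, hA, hAv⟩ := exists_mem_genMatrices_mulVec_eq_single v
  rw [hv1, Real.sqrt_one, Quaternion.coe_one] at hAv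
  set w := A * z * Aᴴ
  have hw : wᴴ = w := by
    simp only [w, conjTranspose_mul, conjTranspose_conjTranspose, hz, mul_assoc]
  have hwe := mulVec_conj_mulVec_eq_smul (genMatrices_le_unitary hA) hv
  rw [hAv, mulVec_single_one] at hwe
  obtain ⟨B, hB, S, hS, hBw⟩ := exists_mem_genMatrices_conj_eq_map hw
    (by simpa using congrFun hwe 1) (by simpa using congrFun hwe 2)
  obtain ⟨O, hO, d, hOS⟩ := hS.exists_mem_specialOrthogonalGroup_conj_eq_diagonal (by decide)
  obtain ⟨u, hu, hu'⟩ := mul_mem (mul_mem (map_mem_genMatrices hO) hB) hA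
  refine ⟨u, hu, d, ?_⟩
  calc u.val * z * (u.val)ᴴ
      = O.map (algebraMap ℝ ℍ) * (B * w * Bᴴ) * (O.map (algebraMap ℝ ℍ))ᴴ := by
        rw [← Units.coeHom_apply, hu']
        simp only [w, conjTranspose_mul, mul_assoc]
    _ = (O * S * Oᵀ).map (algebraMap ℝ ℍ) := by
        rw [hBw, conjTranspose_map_algebraMap, Matrix.map_mul, Matrix.map_mul]
    _ = _ := by rw [hOS, diagonal_map (map_zero _)]

end
end

section
/- Let H be a metric space with bounded geometry, and let X ⊆ H be a uniform net such that X, with the metric induced from H, satisfies property (H). Then every uniform net Y ⊆ H, with the induced metric, also satisfies property (H). -/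
/-- A metric space satisfies property `(H_δ)` if there is a polynomial `P` such that
for all `r ≥ 0` and all `x, y`, the set of points `t` with `d(x,t) ≤ r` lying on a
`δ`-path from `x` to `y` is finite with at most `P(r)` elements. -/
def HasPropertyHdelta (X : Type*) [MetricSpace X] (δ : ℝ) : Prop :=
  ∃ P : Polynomial ℝ, ∀ r : ℝ, 0 ≤ r → ∀ x y : X,
    {t : X | dist x t ≤ r ∧ dist x t + dist t y ≤ dist x y + δ}.Finite ∧
    ({t : X | dist x t ≤ r ∧ dist x t + dist t y ≤ dist x y + δ}).ncard ≤ P.eval r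

/-- A metric space satisfies property `(H)` if it satisfies `(H_δ)` for every `δ ≥ 0`. -/
def HasPropertyH (X : Type*) [MetricSpace X] : Prop :=
  ∀ δ : ℝ, 0 ≤ δ → HasPropertyHdelta X δ

/-- A subset `Y` of a metric space is a uniform net if distinct points of `Y` are
uniformly separated and every point of the space is uniformly close to `Y`. -/
def IsUniformNet {H : Type*} [MetricSpace H] (Y : Set H) : Prop :=
  ∃ r R : ℝ, 0 < r ∧ 0 < R ∧
    (∀ y ∈ Y, ∀ z ∈ Y, y ≠ z → r ≤ dist y z) ∧
    (∀ x : H, ∃ y ∈ Y, dist x y < R)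

/-- A metric space has bounded geometry if uniformly separated subsets of balls of a
given radius have uniformly bounded cardinality. -/
def HasBoundedGeometry (H : Type*) [MetricSpace H] : Prop :=
  ∀ R r : ℝ, 0 < R → 0 < r → ∃ N : ℕ, ∀ (c : H) (s : Set H),
    s ⊆ Metric.closedBall c R → (∀ x ∈ s, ∀ y ∈ s, x ≠ y → r ≤ dist x y) →
    s.Finite ∧ s.ncard ≤ N

/-- If one uniform net in a metric space with bounded geometry satisfies property
`(H)`, then so does every other uniform net in it. -/
theorem propertyH_independent_of_uniform_net {H : Type*} [MetricSpace H]
    (hbg : HasBoundedGeometry H) (X Y : Set H)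
    (hX : IsUniformNet X) (hY : IsUniformNet Y)
    (hXH : HasPropertyH X) : HasPropertyH Y := by
  classical
  obtain ⟨rX, RX, hrX, hRX, _hsepX, hcovX⟩ := hX
  obtain ⟨rY, RY, hrY, hRY, hsepY, _hcovY⟩ := hY
  choose f hfX hfd using hcovX
  obtain ⟨N, hN⟩ := hbg RX rY hRX hrY
  intro δ hδ
  obtain ⟨P, hP⟩ := hXH (δ + 6 * RX) (by linarith)
  refine ⟨Polynomial.C (N : ℝ) * (P.comp (Polynomial.X + Polynomial.C (2 * RX))), ?_⟩
  intro r hr x y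
  set S : Set ↥Y := {t : ↥Y | dist x t ≤ r ∧ dist x t + dist t y ≤ dist x y + δ} with hS
  set x' : ↥X := ⟨f ↑x, hfX ↑x⟩
  set y' : ↥X := ⟨f ↑y, hfX ↑y⟩
  obtain ⟨hfin', hcard'⟩ := hP (r + 2 * RX) (by linarith) x' y'
  set S' : Set ↥X := {t : ↥X | dist x' t ≤ r + 2 * RX ∧
      dist x' t + dist t y' ≤ dist x' y' + (δ + 6 * RX)} with hS'
  set g : ↥Y → ↥X := fun t => ⟨f ↑t, hfX ↑t⟩ with hg
  have hfdle : ∀ z : H, dist z (f z) ≤ RX := fun z => (hfd z).le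
  have hmaps : ∀ t ∈ S, g t ∈ S' := by
    intro t ht
    obtain ⟨h1, h2⟩ := ht
    simp only [Subtype.dist_eq] at h1 h2
    have d1 : dist (f ↑x) (f ↑t) ≤ dist (f ↑x) (↑x : H) + dist (↑x : H) ↑t
        + dist (↑t : H) (f ↑t) := dist_triangle4 _ _ _ _
    have d2 : dist (f ↑t) (f ↑y) ≤ dist (f ↑t) (↑t : H) + dist (↑t : H) ↑y
        + dist (↑y : H) (f ↑y) := dist_triangle4 _ _ _ _
    have d3 : dist (↑x : H) ↑y ≤ dist (↑x : H) (f ↑x) + dist (f ↑x) (f ↑y)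
        + dist (f ↑y) (↑y : H) := dist_triangle4 _ _ _ _
    have e1 := hfdle (↑x : H)
    have e2 := hfdle (↑t : H)
    have e3 := hfdle (↑y : H)
    rw [dist_comm (f ↑x) (↑x : H)] at d1
    rw [dist_comm (f ↑t) (↑t : H)] at d2
    rw [dist_comm (f ↑y) (↑y : H)] at d3
    constructor
    · show dist x' (g t) ≤ r + 2 * RX
      rw [Subtype.dist_eq]
      simp only [x', g]
      linarith
    · show dist x' (g t) + dist (g t) y' ≤ dist x' y' + (δ + 6 * RX)
      rw [Subtype.dist_eq, Subtype.dist_eq, Subtype.dist_eq]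
      simp only [x', y', g]
      linarith
  -- each fiber of g over a point s has at most N elements
  have hfiber : ∀ s : ↥X, ({t ∈ S | g t = s} : Set ↥Y).Finite ∧
      ({t ∈ S | g t = s} : Set ↥Y).ncard ≤ N := by
    intro s
    set F : Set ↥Y := {t ∈ S | g t = s}
    have himg : (Subtype.val '' F : Set H) ⊆ Metric.closedBall (↑s : H) RX := by
      rintro _ ⟨t, ht, rfl⟩
      have : f ↑t = (↑s : H) := congrArg Subtype.val ht.2
      rw [Metric.mem_closedBall, ← this, dist_comm]
      rw [dist_comm]
      exact hfdle _
    have hsep : ∀ a ∈ (Subtype.val '' F : Set H), ∀ b ∈ (Subtype.val '' F : Set H),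
        a ≠ b → rY ≤ dist a b := by
      rintro _ ⟨a, _, rfl⟩ _ ⟨b, _, rfl⟩ hab
      exact hsepY _ a.2 _ b.2 hab
    obtain ⟨hFfin, hFcard⟩ := hN (↑s : H) _ himg hsep
    have hinj : Set.InjOn Subtype.val F := Subtype.val_injective.injOn
    constructor
    · exact (Set.Finite.of_finite_image hFfin hinj)
    · rwa [Set.ncard_image_of_injOn hinj] at hFcard
  have hSsub : S ⊆ ⋃ s ∈ S', {t ∈ S | g t = s} := by
    intro t ht
    exact Set.mem_biUnion (hmaps t ht) ⟨ht, rfl⟩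
  have hSfin : S.Finite := by
    refine Set.Finite.subset (Set.Finite.biUnion hfin' fun s _ => (hfiber s).1) hSsub
  refine ⟨hSfin, ?_⟩
  -- counting via Finsets
  have hT' := hfin'
  set T : Finset ↥Y := hSfin.toFinset
  set T' : Finset ↥X := hfin'.toFinset
  have hTmaps : ∀ t ∈ T, g t ∈ T' := by
    intro t ht
    rw [Set.Finite.mem_toFinset] at ht ⊢
    exact hmaps t ht
  have hfibT : ∀ b ∈ T', (T.filter fun a => g a = b).card ≤ N := by
    intro b _
    have : ((T.filter fun a => g a = b) : Set ↥Y) ⊆ {t ∈ S | g t = b} := by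
      intro t ht
      simp only [Finset.coe_filter, Set.mem_setOf_eq] at ht
      exact ⟨(Set.Finite.mem_toFinset _).mp ht.1, ht.2⟩
    calc (T.filter fun a => g a = b).card
        = ((T.filter fun a => g a = b) : Set ↥Y).ncard := by
          rw [Set.ncard_coe_finset]
      _ ≤ ({t ∈ S | g t = b} : Set ↥Y).ncard :=
          Set.ncard_le_ncard this (hfiber b).1
      _ ≤ N := (hfiber b).2
  have hcount : T.card ≤ N * T'.card :=
    Finset.card_le_mul_card_image_of_maps_to hTmaps N hfibT
  have hSn : S.ncard = T.card := Set.ncard_eq_toFinset_card _ hSfin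
  have hS'n : S'.ncard = T'.card := Set.ncard_eq_toFinset_card _ hfin'
  have hcast : (S.ncard : ℝ) ≤ (N : ℝ) * (S'.ncard : ℝ) := by
    rw [hSn, hS'n]
    exact_mod_cast hcount
  have hfinal : (S.ncard : ℝ) ≤ (N : ℝ) * P.eval (r + 2 * RX) := by
    calc (S.ncard : ℝ) ≤ (N : ℝ) * (S'.ncard : ℝ) := hcast
      _ ≤ (N : ℝ) * P.eval (r + 2 * RX) := by
          apply mul_le_mul_of_nonneg_left hcard' (by positivity)
  simpa [Polynomial.eval_comp] using hfinal
end

section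
/- Let X₁, …, X_n be metric spaces each satisfying property (H). Then their product X₁ × … × X_n, equipped with the ℓ¹ combination of the distances d((x₁,…,x_n),(y₁,…,y_n)) = d₁(x₁,y₁) + … + d_n(x_n,y_n), satisfies property (H). -/
/-- The set whose size `HasPropertyHdelta` bounds. -/
def deltaPathBall {X : Type*} [Dist X] (x y : X) (r δ : ℝ) : Set X :=
  {t | dist x t ≤ r ∧ dist x t + dist t y ≤ dist x y + δ}

theorem PiLp.dist_one_eq_sum {ι : Type*} [Fintype ι] {X : ι → Type*} [∀ i, Dist (X i)]
    (a b : PiLp 1 X) : dist a b = ∑ i, dist (a i) (b i) := by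
  simp [PiLp.dist_eq_sum (p := 1) (by simp)]

theorem Set.ncard_univ_pi {ι : Type*} [Fintype ι] {α : ι → Type*} (s : ∀ i, Set (α i)) :
    (Set.univ.pi s).ncard = ∏ i, (s i).ncard := by
  rw [← Nat.card_coe_set_eq, Nat.card_congr (Equiv.Set.univPi s), Nat.card_pi]
  exact Finset.prod_congr rfl fun i _ ↦ Nat.card_coe_set_eq (s i)

/-- The `ℓ¹` defect `d(x,t) + d(t,y) - d(x,y)` is the sum of the nonnegative coordinate defects,
so each of them is at most `δ`. -/
theorem PiLp.apply_mem_deltaPathBall {ι : Type*} [Fintype ι] {X : ι → Type*}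
    [∀ i, PseudoMetricSpace (X i)] {x y t : PiLp 1 X} {r δ : ℝ}
    (ht : t ∈ deltaPathBall x y r δ) (i : ι) :
    t i ∈ deltaPathBall (x i) (y i) r δ := by
  obtain ⟨hr, hδ⟩ := ht
  simp only [PiLp.dist_one_eq_sum] at hr hδ
  refine ⟨(Finset.single_le_sum (fun j _ ↦ dist_nonneg) (Finset.mem_univ i)).trans hr, ?_⟩
  have hdefect_nonneg : ∀ j ∈ Finset.univ,
      0 ≤ dist (x j) (t j) + dist (t j) (y j) - dist (x j) (y j) :=
    fun j _ ↦ by linarith [dist_triangle (x j) (t j) (y j)]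
  have hdefect_sum : ∑ j, (dist (x j) (t j) + dist (t j) (y j) - dist (x j) (y j)) ≤ δ := by
    rw [Finset.sum_sub_distrib, Finset.sum_add_distrib]
    linarith
  linarith [Finset.single_le_sum hdefect_nonneg (Finset.mem_univ i)]

theorem HasPropertyHdelta.piLp_one {ι : Type*} [Fintype ι] {X : ι → Type*}
    [∀ i, MetricSpace (X i)] {δ : ℝ} (h : ∀ i, HasPropertyHdelta (X i) δ) :
    HasPropertyHdelta (PiLp 1 X) δ := by
  choose P hP using h
  refine ⟨∏ i, P i, fun r hr x y ↦ ?_⟩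
  have hfin : ∀ i, (deltaPathBall (x i) (y i) r δ).Finite := fun i ↦ (hP i r hr (x i) (y i)).1
  have hpi_fin := Set.Finite.pi hfin
  have hsub : WithLp.ofLp '' deltaPathBall x y r δ ⊆
      Set.univ.pi fun i ↦ deltaPathBall (x i) (y i) r δ := by
    rintro _ ⟨t, ht, rfl⟩ i -
    exact PiLp.apply_mem_deltaPathBall ht i
  have hinj := WithLp.ofLp_injective 1 (V := ∀ i, X i)
  refine ⟨(hpi_fin.subset hsub).of_finite_image hinj.injOn, ?_⟩
  calc ((deltaPathBall x y r δ).ncard : ℝ)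
      ≤ ∏ i, ((deltaPathBall (x i) (y i) r δ).ncard : ℝ) := by
        rw [← Set.ncard_image_of_injective _ hinj]
        exact_mod_cast (Set.ncard_le_ncard hsub hpi_fin).trans_eq (Set.ncard_univ_pi _)
    _ ≤ ∏ i, (P i).eval r :=
        Finset.prod_le_prod (fun i _ ↦ Nat.cast_nonneg _) fun i _ ↦ (hP i r hr (x i) (y i)).2
    _ = (∏ i, P i).eval r := (Polynomial.eval_prod _ _ _).symm

/-- A finite product of metric spaces with property `(H)`, equipped with the `ℓ¹`
combination of the distances (the `PiLp 1` metric), satisfies property `(H)`. -/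
theorem propertyH_of_l1_product {n : ℕ} (X : Fin n → Type*)
    [∀ i, MetricSpace (X i)] (h : ∀ i, HasPropertyH (X i)) :
    HasPropertyH (PiLp 1 X) :=
  fun δ hδ ↦ HasPropertyHdelta.piLp_one fun i ↦ h i δ hδ
end

section
/- Let H₁, …, H_n be nonempty metric spaces, each with bounded geometry, such that every uniform net in each H_i (with the induced metric) satisfies property (H). Equip H = H₁ × … × H_n with the ℓ¹ combination of the distances d((x₁,…,x_n),(y₁,…,y_n)) = d₁(x₁,y₁) + … + d_n(x_n,y_n). Then every uniform net in H, with the induced metric, satisfies property (H). -/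
/-!
Pick in each factor a maximal `1`-separated set `Xᵢ`; it is a uniform net, hence has property (H).
In the `ℓ¹` metric the excess `d(x,t) + d(t,y) - d(x,y)` is the sum of the coordinatewise
excesses, so every coordinate of a point of a `δ`-interval ball of the product lies in the
corresponding `δ`-interval ball of the factor, and `∏ Xᵢ` has property (H) with the product of
the factors' polynomials. Property (H) then passes from the net `∏ Xᵢ` to any separated set `Y`
within distance `R` of it: sending each point of `Y` to a nearby point of `∏ Xᵢ` maps
`δ`-interval balls of radius `r` into `(δ + 6R)`-interval balls of radius `r + 2R`, and the
bounded geometry of the product, inherited from the factors, bounds the fibres of this map.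
-/

open Set Metric

section Counting

variable {α β ι : Type*} {κ : ι → Type*}

theorem Set.ncard_univ_pi_s14 [Fintype ι] (t : ∀ i, Set (κ i)) :
    (pi univ t).ncard = ∏ i, (t i).ncard := by
  rw [← Nat.card_coe_set_eq, Nat.card_congr (Equiv.Set.univPi t), Nat.card_pi]
  simp only [Nat.card_coe_set_eq]

theorem Set.finite_and_ncard_le_prod_of_injOn [Fintype ι]
    {s : Set α} {t : ∀ i, Set (κ i)} {f : α → ∀ i, κ i} (hf : MapsTo f s (pi univ t))
    (hinj : InjOn f s) (ht : ∀ i, (t i).Finite) :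
    s.Finite ∧ s.ncard ≤ ∏ i, (t i).ncard :=
  ⟨(Finite.pi ht).of_injOn hf hinj,
    ncard_univ_pi_s14 t ▸ ncard_le_ncard_of_injOn f hf hinj (Finite.pi ht)⟩

theorem Set.Finite.finite_and_ncard_le_mul_of_mapsTo {s : Set α} {t : Set β} {f : α → β}
    {n : ℕ} (ht : t.Finite) (hf : MapsTo f s t)
    (hfib : ∀ b ∈ t, (s ∩ f ⁻¹' {b}).Finite ∧ (s ∩ f ⁻¹' {b}).ncard ≤ n) :
    s.Finite ∧ s.ncard ≤ n * t.ncard := by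
  have hcover : s ⊆ ⋃ b ∈ ht.toFinset, s ∩ f ⁻¹' {b} := fun a ha =>
    mem_biUnion (ht.mem_toFinset.2 (hf ha)) ⟨ha, rfl⟩
  have hfin : (⋃ b ∈ ht.toFinset, s ∩ f ⁻¹' {b}).Finite :=
    ht.toFinset.finite_toSet.biUnion fun b hb => (hfib b (ht.mem_toFinset.1 hb)).1
  refine ⟨hfin.subset hcover, ?_⟩
  calc s.ncard ≤ (⋃ b ∈ ht.toFinset, s ∩ f ⁻¹' {b}).ncard := ncard_le_ncard hcover hfin
    _ ≤ ∑ b ∈ ht.toFinset, (s ∩ f ⁻¹' {b}).ncard := ht.toFinset.set_ncard_biUnion_le _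
    _ ≤ ht.toFinset.card • n :=
      Finset.sum_le_card_nsmul _ _ _ fun b hb => (hfib b (ht.mem_toFinset.1 hb)).2
    _ = n * t.ncard := by rw [ncard_eq_toFinset_card t ht, smul_eq_mul, mul_comm]

end Counting

theorem Metric.exists_separated_subset_forall_exists_dist_lt {X : Type*} [MetricSpace X]
    (A : Set X) {ε : ℝ} (hε : 0 < ε) :
    ∃ T ⊆ A, T.Pairwise (fun a b => ε ≤ dist a b) ∧ ∀ x ∈ A, ∃ a ∈ T, dist x a < ε := by
  obtain ⟨T, hT⟩ := zorn_subset {T | T ⊆ A ∧ T.Pairwise (fun a b => ε ≤ dist a b)}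
    fun c hc hchain => ⟨⋃₀ c, ⟨sUnion_subset fun t ht => (hc ht).1,
      (pairwise_sUnion hchain.directedOn).2 fun t ht => (hc ht).2⟩,
      fun _ => subset_sUnion_of_mem⟩
  refine ⟨T, hT.prop.1, hT.prop.2, fun x hx => ?_⟩
  by_contra! hfar
  have hxT : x ∉ T := fun h => by simpa using (hfar x h).trans_lt' hε
  have hins : insert x T ⊆ A ∧ (insert x T).Pairwise (fun a b => ε ≤ dist a b) :=
    ⟨insert_subset hx hT.prop.1,
      hT.prop.2.insert fun b hb _ => ⟨hfar b hb, dist_comm x b ▸ hfar b hb⟩⟩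
  exact hxT (hT.eq_of_subset hins (subset_insert x T) ▸ mem_insert x T)

theorem HasBoundedGeometry.exists_finite_cover {X : Type*} [MetricSpace X]
    (h : HasBoundedGeometry X) {R ε : ℝ} (hR : 0 < R) (hε : 0 < ε) :
    ∃ N : ℕ, ∀ c : X, ∃ T : Set X, T.Finite ∧ T.ncard ≤ N ∧
      ∀ x ∈ closedBall c R, ∃ a ∈ T, dist x a < ε := by
  obtain ⟨N, hN⟩ := h R ε hR hε
  refine ⟨N, fun c => ?_⟩
  obtain ⟨T, hTA, hTsep, hTcov⟩ :=
    exists_separated_subset_forall_exists_dist_lt (closedBall c R) hε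
  obtain ⟨hfin, hcard⟩ := hN c T hTA fun a ha b hb => hTsep ha hb
  exact ⟨T, hfin, hcard, hTcov⟩

section IntervalBall

variable {X : Type*} [MetricSpace X]

def intervalBall (δ r : ℝ) (x y : X) : Set X :=
  {t | dist x t ≤ r ∧ dist x t + dist t y ≤ dist x y + δ}

theorem hasPropertyHdelta_iff (δ : ℝ) : HasPropertyHdelta X δ ↔
    ∃ P : Polynomial ℝ, ∀ r : ℝ, 0 ≤ r → ∀ x y : X,
      (intervalBall δ r x y).Finite ∧ ((intervalBall δ r x y).ncard : ℝ) ≤ P.eval r :=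
  Iff.rfl

theorem Isometry.preimage_intervalBall {Y : Type*} [MetricSpace Y] {f : X → Y} (hf : Isometry f)
    (δ r : ℝ) (x y : X) : f ⁻¹' intervalBall δ r (f x) (f y) = intervalBall δ r x y := by
  ext t
  simp only [intervalBall, mem_preimage, mem_ofPred_eq, hf.dist_eq]

theorem mem_intervalBall_of_dist_le {δ r R : ℝ} {x y t x' y' t' : X}
    (ht : t ∈ intervalBall δ r x y) (hx : dist x x' ≤ R) (hy : dist y y' ≤ R)
    (htt : dist t t' ≤ R) :
    t' ∈ intervalBall (δ + 6 * R) (r + 2 * R) x' y' := by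
  obtain ⟨hxt, hxty⟩ := ht
  have h₁ := dist_triangle4 x' x t t'
  have h₂ := dist_triangle4 t' t y y'
  have h₃ := dist_triangle4 x x' y' y
  rw [dist_comm x' x] at h₁
  rw [dist_comm t' t] at h₂
  rw [dist_comm y' y] at h₃
  constructor <;> linarith

end IntervalBall

theorem HasPropertyHdelta.of_isometry {X Y : Type*} [MetricSpace X] [MetricSpace Y] {f : X → Y}
    (hf : Isometry f) {δ : ℝ} (h : HasPropertyHdelta Y δ) : HasPropertyHdelta X δ := by
  rw [hasPropertyHdelta_iff] at h ⊢
  obtain ⟨P, hP⟩ := h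
  refine ⟨P, fun r hr x y => ?_⟩
  obtain ⟨hfin, hcard⟩ := hP r hr (f x) (f y)
  rw [← hf.preimage_intervalBall]
  refine ⟨hfin.preimage hf.injective.injOn, le_trans ?_ hcard⟩
  exact_mod_cast ncard_le_ncard_of_injOn f (mapsTo_preimage _ _) hf.injective.injOn hfin

theorem HasPropertyH.of_isometry {X Y : Type*} [MetricSpace X] [MetricSpace Y] {f : X → Y}
    (hf : Isometry f) (h : HasPropertyH Y) : HasPropertyH X :=
  fun δ hδ => (h δ hδ).of_isometry hf

section PiLp

variable {ι : Type*} [Fintype ι] {X : ι → Type*} [∀ i, MetricSpace (X i)]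

theorem PiLp.dist_eq_sum_dist_of_L1 (x y : PiLp 1 X) : dist x y = ∑ i, dist (x i) (y i) := by
  simp [PiLp.dist_eq_sum (p := 1) one_pos]

theorem PiLp.apply_mem_intervalBall_of_L1 {δ r : ℝ} {x y t : PiLp 1 X}
    (ht : t ∈ intervalBall δ r x y) (i : ι) : t i ∈ intervalBall δ r (x i) (y i) := by
  obtain ⟨hxt, hxty⟩ := ht
  refine ⟨(PiLp.dist_apply_le x t i).trans hxt, ?_⟩
  have hexcess : ∑ j, (dist (x j) (t j) + dist (t j) (y j) - dist (x j) (y j)) ≤ δ := by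
    simp only [PiLp.dist_eq_sum_dist_of_L1] at hxty
    rw [Finset.sum_sub_distrib, Finset.sum_add_distrib]
    linarith
  have := (Finset.single_le_sum (fun j _ => sub_nonneg.2 (dist_triangle (x j) (t j) (y j)))
    (Finset.mem_univ i)).trans hexcess
  linarith

theorem HasPropertyH.piLp_one (h : ∀ i, HasPropertyH (X i)) : HasPropertyH (PiLp 1 X) := by
  intro δ hδ
  choose P hP using fun i => hasPropertyHdelta_iff δ |>.1 (h i δ hδ)
  refine (hasPropertyHdelta_iff δ).2 ⟨∏ i, P i, fun r hr x y => ?_⟩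
  have hmaps : MapsTo WithLp.ofLp (intervalBall δ r x y)
      (pi univ fun i => intervalBall δ r (x i) (y i)) :=
    fun t ht i _ => PiLp.apply_mem_intervalBall_of_L1 ht i
  obtain ⟨hfin, hcard⟩ :=
    finite_and_ncard_le_prod_of_injOn hmaps (WithLp.ofLp_injective 1).injOn
      fun i => (hP i r hr (x i) (y i)).1
  refine ⟨hfin, ?_⟩
  calc ((intervalBall δ r x y).ncard : ℝ)
      ≤ ∏ i, ((intervalBall δ r (x i) (y i)).ncard : ℝ) := by exact_mod_cast hcard
    _ ≤ ∏ i, (P i).eval r :=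
        Finset.prod_le_prod (fun i _ => by positivity) fun i _ => (hP i r hr (x i) (y i)).2
    _ = (∏ i, P i).eval r := (Polynomial.eval_prod _ _ _).symm

theorem HasBoundedGeometry.piLp_one (h : ∀ i, HasBoundedGeometry (X i)) :
    HasBoundedGeometry (PiLp 1 X) := by
  intro R r hR hr
  set ε := r / (2 * Fintype.card ι + 1)
  have hε : 0 < ε := by positivity
  have h2ε : Fintype.card ι * (2 * ε) < r :=
    calc Fintype.card ι * (2 * ε)
        = r * (2 * Fintype.card ι) / (2 * Fintype.card ι + 1) := by ring
      _ < r := by rw [div_lt_iff₀ (by positivity)]; linarith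
  choose N hN using fun i => (h i).exists_finite_cover hR hε
  refine ⟨∏ i, N i, fun c s hs hsep => ?_⟩
  choose T hTfin hTcard hTcov using fun i => hN i (c i)
  have hnear : ∀ (x : PiLp 1 X) i, ∃ a, x ∈ s → a ∈ T i ∧ dist (x i) a < ε := by
    intro x i
    by_cases hx : x ∈ s
    · exact (hTcov i _ (mem_closedBall.2 ((PiLp.dist_apply_le x c i).trans
        (mem_closedBall.1 (hs hx))))).imp fun _ ha _ => ha
    · exact ⟨x i, fun h => absurd h hx⟩
  choose f hf using hnear
  have hinj : InjOn f s := by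
    intro x hx y hy hxy
    by_contra hne
    have hle : dist x y ≤ Fintype.card ι * (2 * ε) := by
      rw [PiLp.dist_eq_sum_dist_of_L1]
      refine (Finset.sum_le_sum fun i _ => ?_).trans_eq (by simp : ∑ _i : ι, 2 * ε = _)
      calc dist (x i) (y i) ≤ dist (x i) (f x i) + dist (y i) (f y i) := by
            rw [hxy, dist_comm (y i)]; exact dist_triangle _ _ _
        _ ≤ 2 * ε := by linarith [(hf x i hx).2, (hf y i hy).2]
    linarith [hsep x hx y hy hne]
  obtain ⟨hfin, hcard⟩ :=
    finite_and_ncard_le_prod_of_injOn (fun x hx i _ => (hf x i hx).1) hinj hTfin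
  exact ⟨hfin, hcard.trans (Finset.prod_le_prod' fun i _ => hTcard i)⟩

end PiLp

section PiLpSets

variable {ι : Type*} [Fintype ι] {H : ι → Type*} [∀ i, MetricSpace (H i)]

theorem PiLp.isometry_toLp_subtype_pi_of_L1 (X : ∀ i, Set (H i)) :
    Isometry fun z : {z : PiLp 1 H | ∀ i, z i ∈ X i} =>
      WithLp.toLp 1 fun i => (⟨z.1 i, z.2 i⟩ : X i) :=
  Isometry.of_dist_eq fun a b => by
    simp only [PiLp.dist_eq_sum_dist_of_L1, Subtype.dist_eq]

theorem PiLp.exists_mem_pi_dist_le_of_L1 {X : ∀ i, Set (H i)} {ε : ℝ}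
    (hX : ∀ i, ∀ x : H i, ∃ a ∈ X i, dist x a < ε) (y : PiLp 1 H) :
    ∃ z ∈ {z : PiLp 1 H | ∀ i, z i ∈ X i}, dist y z ≤ Fintype.card ι * ε := by
  choose a haX hya using fun i => hX i (y i)
  refine ⟨WithLp.toLp 1 a, haX, ?_⟩
  rw [PiLp.dist_eq_sum_dist_of_L1]
  exact (Finset.sum_le_sum fun i _ => (hya i).le).trans_eq (by simp)

end PiLpSets

theorem HasBoundedGeometry.exists_ncard_le_of_pairwise {W : Type*} [MetricSpace W]
    (hW : HasBoundedGeometry W) {Y : Set W} {ρ R : ℝ} (hρ : 0 < ρ) (hR : 0 < R)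
    (hsep : Y.Pairwise fun a b => ρ ≤ dist a b) :
    ∃ N : ℕ, ∀ (c : W) (s : Set Y), (↑) '' s ⊆ closedBall c R → s.Finite ∧ s.ncard ≤ N := by
  obtain ⟨N, hN⟩ := hW R ρ hR hρ
  refine ⟨N, fun c s hs => ?_⟩
  have hinj : InjOn ((↑) : Y → W) s := Subtype.val_injective.injOn
  obtain ⟨hfin, hcard⟩ := hN c _ hs <| by
    rintro _ ⟨a, -, rfl⟩ _ ⟨b, -, rfl⟩ hab
    exact hsep a.2 b.2 hab
  exact ⟨hfin.of_finite_image hinj, hinj.ncard_image ▸ hcard⟩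

theorem HasPropertyH.of_separated_of_near {W : Type*} [MetricSpace W] (hW : HasBoundedGeometry W)
    {X Y : Set W} (hX : HasPropertyH X) {ρ R : ℝ} (hρ : 0 < ρ) (hR : 0 < R)
    (hsep : Y.Pairwise fun a b => ρ ≤ dist a b) (hnear : ∀ y ∈ Y, ∃ x ∈ X, dist y x ≤ R) :
    HasPropertyH Y := by
  intro δ hδ
  obtain ⟨P, hP⟩ := (hasPropertyHdelta_iff _).1 (hX (δ + 6 * R) (by positivity))
  obtain ⟨N, hN⟩ := hW.exists_ncard_le_of_pairwise hρ hR hsep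
  have hφ : ∀ t : Y, ∃ u : X, dist (t : W) u ≤ R := fun t =>
    let ⟨u, hu, htu⟩ := hnear t t.2
    ⟨⟨u, hu⟩, htu⟩
  choose φ hφ using hφ
  refine (hasPropertyHdelta_iff δ).2
    ⟨.C (N : ℝ) * P.comp (.X + .C (2 * R)), fun r hr x y => ?_⟩
  have hmaps : MapsTo φ (intervalBall δ r x y)
      (intervalBall (δ + 6 * R) (r + 2 * R) (φ x) (φ y)) := fun t ht => by
    rw [← isometry_subtype_coe.preimage_intervalBall, mem_preimage] at ht ⊢
    exact mem_intervalBall_of_dist_le ht (hφ x) (hφ y) (hφ t)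
  have hfib : ∀ u : X, (intervalBall δ r x y ∩ φ ⁻¹' {u}).Finite ∧
      (intervalBall δ r x y ∩ φ ⁻¹' {u}).ncard ≤ N := fun u =>
    hN u _ (by rintro _ ⟨t, ⟨-, rfl⟩, rfl⟩; exact mem_closedBall.2 (hφ t))
  obtain ⟨hTfin, hTcard⟩ := hP (r + 2 * R) (by positivity) (φ x) (φ y)
  obtain ⟨hfin, hcard⟩ := hTfin.finite_and_ncard_le_mul_of_mapsTo hmaps fun u _ => hfib u
  refine ⟨hfin, ?_⟩
  calc ((intervalBall δ r x y).ncard : ℝ)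
      ≤ N * ((intervalBall (δ + 6 * R) (r + 2 * R) (φ x) (φ y)).ncard : ℝ) := by
        exact_mod_cast hcard
    _ ≤ N * P.eval (r + 2 * R) := by gcongr
    _ = _ := by simp [Polynomial.eval_comp]

theorem propertyH_of_uniform_net_in_l1_product_general {n : ℕ} (H : Fin n → Type*)
    [∀ i, MetricSpace (H i)]
    (hbg : ∀ i, HasBoundedGeometry (H i))
    (hnets : ∀ i (X : Set (H i)), IsUniformNet X → HasPropertyH X)
    (Y : Set (PiLp 1 H)) (hY : IsUniformNet Y) : HasPropertyH Y := by
  choose X _ hXsep hXnear using fun i =>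
    exists_separated_subset_forall_exists_dist_lt (univ : Set (H i)) one_pos
  have hXnet : ∀ i, IsUniformNet (X i) := fun i =>
    ⟨1, 2, one_pos, two_pos, fun a ha b hb => hXsep i ha hb,
      fun x => (hXnear i x trivial).imp fun _ ha => ⟨ha.1, ha.2.trans one_lt_two⟩⟩
  have hXprod : HasPropertyH {z : PiLp 1 H | ∀ i, z i ∈ X i} :=
    (HasPropertyH.piLp_one fun i => hnets i _ (hXnet i)).of_isometry
      (PiLp.isometry_toLp_subtype_pi_of_L1 X)
  obtain ⟨ρ, -, hρ, -, hYsep, -⟩ := hY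
  refine hXprod.of_separated_of_near (HasBoundedGeometry.piLp_one hbg) hρ (R := n + 1)
    (by positivity) (fun a ha b hb => hYsep a ha b hb) fun y _ => ?_
  obtain ⟨z, hz, hyz⟩ := PiLp.exists_mem_pi_dist_le_of_L1 (fun i x => hXnear i x trivial) y
  exact ⟨z, hz, hyz.trans (by simp)⟩

/-- If `H₁, …, H_n` are nonempty metric spaces with bounded geometry all of whose
uniform nets satisfy property `(H)`, then every uniform net in the `ℓ¹` product
`H₁ × … × H_n` (the `PiLp 1` metric) satisfies property `(H)`. -/
theorem propertyH_of_uniform_net_in_l1_product {n : ℕ} (H : Fin n → Type*)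
    [∀ i, MetricSpace (H i)] [∀ i, Nonempty (H i)]
    (hbg : ∀ i, HasBoundedGeometry (H i))
    (hnets : ∀ i (X : Set (H i)), IsUniformNet X → HasPropertyH X)
    (Y : Set (PiLp 1 H)) (hY : IsUniformNet Y) : HasPropertyH Y :=
  propertyH_of_uniform_net_in_l1_product_general H hbg hnets Y hY
end
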